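/- Let A be a k×k symmetric positive definite matrix with A·1 = 1 and M = [[A, -1],[-1^T, k]] as above. Then for all i,j ∈ {1,...,k}, (M^+)_{i,j} = (A^{-1})_{i,j} − 2/(1+k) + k/(1+k)^2 = (A^{-1})_{i,j} − (k+2)/(1+k)^2. -/

import Mathlib

/-!
The bordered matrix `M` is symmetric and annihilates the constant vector `𝟙`. Let
`Π = I - 𝟙𝟙ᵀ/(k+1)` be the orthogonal projection onto `𝟙ᗮ` (so `M Π = M`) and `D = diag(A⁻¹, 0)`.
Since `A⁻¹` also has unit row and column sums, `M D = I - e_{k+1} 𝟙ᵀ`, hence `M (Π D Π) = M D Π = Π`.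
A symmetric `Q` with `M Q = Π` and `Q Π = Q` satisfies the four Penrose equations, so `M⁺ = Π D Π`,
whose `(i, j)` entry is `A⁻¹ i j - 2/(k+1) + k/(k+1)²`.
-/

open Matrix Finset

/-- `B` is the Moore–Penrose pseudoinverse of `A`. -/
def IsMoorePenrose {n : Type*} [Fintype n] (A B : Matrix n n ℝ) : Prop :=
  A * B * A = A ∧ B * A * B = B ∧ (A * B)ᵀ = A * B ∧ (B * A)ᵀ = B * A

namespace IsMoorePenrose

variable {n : Type*} [Fintype n] {A B C : Matrix n n ℝ}

theorem unique (hB : IsMoorePenrose A B) (hC : IsMoorePenrose A C) : B = C := by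
  obtain ⟨hB₁, hB₂, hB₃, hB₄⟩ := hB
  obtain ⟨hC₁, hC₂, hC₃, hC₄⟩ := hC
  have hAB : A * B = A * C :=
    calc A * B = (A * C * (A * B))ᵀ := by rw [← mul_assoc, hC₁, hB₃]
      _ = A * B * (A * C) := by rw [transpose_mul, hB₃, hC₃]
      _ = A * C := by rw [← mul_assoc, hB₁]
  have hBA : B * A = C * A :=
    calc B * A = (B * A * (C * A))ᵀ := by rw [← mul_assoc, mul_assoc B, mul_assoc B, hC₁, hB₄]
      _ = C * A * (B * A) := by rw [transpose_mul, hB₄, hC₄]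
      _ = C * A := by rw [mul_assoc, ← mul_assoc A, hB₁]
  calc B = B * A * B := hB₂.symm
    _ = C * A * C := by rw [mul_assoc, hAB, ← mul_assoc, hBA]
    _ = C := hC₂

end IsMoorePenrose

theorem isMoorePenrose_mul_mul_of_idempotent {n : Type*} [Fintype n] {M D P : Matrix n n ℝ}
    (hM : M.IsSymm) (hD : D.IsSymm) (hP : P.IsSymm) (hPP : P * P = P) (hMP : M * P = M)
    (hMDP : M * D * P = P) : IsMoorePenrose M (P * D * P) := by
  have hPM : P * M = M := by rw [← hM.eq, ← hP.eq, ← transpose_mul, hMP]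
  have hQ : (P * D * P)ᵀ = P * D * P := by simp only [transpose_mul, hP.eq, hD.eq, mul_assoc]
  have hMQ : M * (P * D * P) = P := by rw [← mul_assoc, ← mul_assoc, hMP, hMDP]
  have hQM : P * D * P * M = P := by rw [← hQ, ← hM.eq, ← transpose_mul, hMQ, hP.eq]
  refine ⟨by rw [hMQ, hPM], ?_, by rw [hMQ, hP.eq], by rw [hQM, hP.eq]⟩
  rw [hQM, ← mul_assoc, ← mul_assoc, hPP]

noncomputable def centeringMatrix (n : Type*) [Fintype n] [DecidableEq n] : Matrix n n ℝ :=
  1 - (Fintype.card n : ℝ)⁻¹ • vecMulVec 1 1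

section centeringMatrix

variable {n : Type*} [Fintype n] [DecidableEq n]

theorem centeringMatrix_isSymm : (centeringMatrix n).IsSymm := by
  rw [IsSymm, centeringMatrix, transpose_sub, transpose_one, transpose_smul, transpose_vecMulVec]

theorem mul_centeringMatrix {m : Type*} {M : Matrix m n ℝ} (hM : M *ᵥ 1 = 0) :
    M * centeringMatrix n = M := by
  rw [centeringMatrix, Matrix.mul_sub, Matrix.mul_one, Matrix.mul_smul, mul_vecMulVec, hM,
    zero_vecMulVec, smul_zero, sub_zero]

theorem centeringMatrix_mulVec_one [Nonempty n] : centeringMatrix n *ᵥ 1 = 0 := by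
  rw [centeringMatrix, sub_mulVec, one_mulVec, smul_mulVec, vecMulVec_mulVec]
  ext
  simp [dotProduct]

theorem centeringMatrix_mul_self [Nonempty n] :
    centeringMatrix n * centeringMatrix n = centeringMatrix n :=
  mul_centeringMatrix centeringMatrix_mulVec_one

theorem one_vecMul_centeringMatrix [Nonempty n] : 1 ᵥ* centeringMatrix n = 0 := by
  rw [← mulVec_transpose, centeringMatrix_isSymm.eq, centeringMatrix_mulVec_one]

end centeringMatrix

theorem centeringMatrix_mul_fromBlocks_mul_centeringMatrix_inl_inl {ι : Type*} [Fintype ι]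
    [DecidableEq ι] {B : Matrix ι ι ℝ} (hB1 : B *ᵥ 1 = 1) (h1B : 1 ᵥ* B = 1) (i j : ι) :
    (centeringMatrix (ι ⊕ Unit) * fromBlocks B 0 0 0 * centeringMatrix _ : Matrix _ _ ℝ)
        (Sum.inl i) (Sum.inl j) =
      B i j - 2 / (1 + Fintype.card ι) + Fintype.card ι / (1 + Fintype.card ι) ^ 2 := by
  have hrow : ∑ l, B i l = 1 := by simpa [mulVec, dotProduct] using congrFun hB1 i
  have h1D : 1 ᵥ* fromBlocks B 0 0 (0 : Matrix Unit Unit ℝ) = Sum.elim (1 : ι → ℝ) 0 := by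
    ext (i | _) <;> simp [vecMul_fromBlocks, h1B]
  simp only [centeringMatrix, Matrix.sub_mul, Matrix.mul_sub, Matrix.one_mul, Matrix.mul_one,
    Matrix.smul_mul, Matrix.mul_smul, vecMulVec_mul, mul_vecMulVec, h1D]
  simp [mulVec, dotProduct, Fintype.card_sum, hrow]
  field_simp
  ring

section borderedMatrix

variable {ι : Type*} [Fintype ι] {A : Matrix ι ι ℝ}

def borderedMatrix (A : Matrix ι ι ℝ) : Matrix (ι ⊕ Unit) (ι ⊕ Unit) ℝ :=
  fromBlocks A (of fun _ _ => -1) (of fun _ _ => -1) (of fun _ _ => (Fintype.card ι : ℝ))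

theorem borderedMatrix_isSymm (hA : A.IsSymm) : (borderedMatrix A).IsSymm :=
  hA.fromBlocks rfl rfl

theorem borderedMatrix_mulVec_one (hA1 : A *ᵥ 1 = 1) : borderedMatrix A *ᵥ 1 = 0 := by
  ext (i | _)
  · have hrow : ∑ l, A i l = 1 := by simpa [mulVec, dotProduct] using congrFun hA1 i
    simp [borderedMatrix, mulVec, dotProduct, hrow]
  · simp [borderedMatrix, mulVec, dotProduct]

variable [DecidableEq ι]

theorem inv_mulVec_one_of_mulVec_one (hdet : IsUnit A.det) (hA1 : A *ᵥ 1 = 1) :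
    A⁻¹ *ᵥ 1 = 1 := by
  nth_rw 1 [← hA1]
  rw [mulVec_mulVec, nonsing_inv_mul _ hdet, one_mulVec]

theorem one_vecMul_inv_of_mulVec_one (hA : A.IsSymm) (hdet : IsUnit A.det) (hA1 : A *ᵥ 1 = 1) :
    1 ᵥ* A⁻¹ = 1 := by
  rw [← hA.inv.eq, vecMul_transpose, inv_mulVec_one_of_mulVec_one hdet hA1]

theorem borderedMatrix_mul_fromBlocks_inv (hA : A.IsSymm) (hdet : IsUnit A.det)
    (hA1 : A *ᵥ 1 = 1) :
    borderedMatrix A * fromBlocks A⁻¹ 0 0 0 = 1 - vecMulVec (Pi.single (Sum.inr ()) 1) 1 := by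
  have h1A := one_vecMul_inv_of_mulVec_one hA hdet hA1
  ext (i | _) (j | _)
  · simp [borderedMatrix, fromBlocks_multiply, mul_nonsing_inv _ hdet, one_apply]
  · simp [borderedMatrix, fromBlocks_multiply]
  · have hcol : ∑ l, A⁻¹ l j = 1 := by simpa [vecMul, dotProduct] using congrFun h1A j
    simp [borderedMatrix, mul_apply, Finset.sum_neg_distrib, hcol]
  · simp [borderedMatrix, fromBlocks_multiply]

theorem isMoorePenrose_borderedMatrix (hA : A.IsSymm) (hdet : IsUnit A.det)
    (hA1 : A *ᵥ 1 = 1) :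
    IsMoorePenrose (borderedMatrix A)
      (centeringMatrix _ * fromBlocks A⁻¹ 0 0 0 * centeringMatrix _) := by
  refine isMoorePenrose_mul_mul_of_idempotent (borderedMatrix_isSymm hA)
    (hA.inv.fromBlocks transpose_zero isSymm_zero) centeringMatrix_isSymm
    centeringMatrix_mul_self (mul_centeringMatrix (borderedMatrix_mulVec_one hA1)) ?_
  rw [borderedMatrix_mul_fromBlocks_inv hA hdet hA1, Matrix.sub_mul, Matrix.one_mul,
    vecMulVec_mul, one_vecMul_centeringMatrix, vecMulVec_zero, sub_zero]

end borderedMatrix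

/-- For `A` symmetric positive definite with `A·1 = 1` and `M = [[A, -1],[-1ᵀ, k]]`,
`(M⁺)_{i,j} = (A⁻¹)_{i,j} − 2/(1+k) + k/(1+k)² = (A⁻¹)_{i,j} − (k+2)/(1+k)²`
for all `i, j ∈ {1,…,k}`. -/
theorem stmt_17 (k : ℕ) (A : Matrix (Fin k) (Fin k) ℝ) (hA : A.PosDef)
    (hA1 : A *ᵥ (fun _ => (1 : ℝ)) = fun _ => (1 : ℝ))
    (P : Matrix (Fin k ⊕ Unit) (Fin k ⊕ Unit) ℝ)
    (hP : IsMoorePenrose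
      (Matrix.fromBlocks A (fun _ _ => -1) (fun _ _ => -1) (fun _ _ => (k : ℝ))) P)
    (i j : Fin k) :
    P (Sum.inl i) (Sum.inl j) = A⁻¹ i j - 2 / (1 + (k : ℝ)) + (k : ℝ) / (1 + (k : ℝ)) ^ 2 ∧
      P (Sum.inl i) (Sum.inl j) = A⁻¹ i j - ((k : ℝ) + 2) / (1 + (k : ℝ)) ^ 2 := by
  have hsymm : A.IsSymm := isHermitian_iff_isSymm.mp hA.isHermitian
  have hdet : IsUnit A.det := hA.det_pos.ne'.isUnit
  have hMP := isMoorePenrose_borderedMatrix hsymm hdet hA1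
  rw [borderedMatrix, Fintype.card_fin] at hMP
  have hentry := centeringMatrix_mul_fromBlocks_mul_centeringMatrix_inl_inl
    (inv_mulVec_one_of_mulVec_one hdet hA1) (one_vecMul_inv_of_mulVec_one hsymm hdet hA1) i j
  rw [Fintype.card_fin, ← hP.unique hMP] at hentry
  refine ⟨hentry, ?_⟩
  rw [hentry]
  field_simp
  ring
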